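/- arXiv:2309.07417 — 4 statements merged into one kernel-verified Lean document; each statement's English description precedes it below -/
import Mathlib

section
/- Let G be a convex N-function with derivative g extended oddly to ℝ, satisfying b·g(b) ≥ p⁻·G(b) for all b > 0. Then for all a < 0 < b, G(|b−a|/2) ≤ (1/(2p⁻))·(g(b)−g(a))·(b−a). -/
/-! Midpoint convexity gives `G((b - a)/2) ≤ (G b + G (-a))/2`, the growth condition bounds each
term by `t g(t) / p⁻`, and oddness with monotonicity makes the cross terms `-a g(b) - b g(a)` of
`(g b - g a)(b - a)` nonnegative. -/

theorem ConvexOn.map_add_div_two_le {s : Set ℝ} {f : ℝ → ℝ} (hf : ConvexOn ℝ s f) {x y : ℝ}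
    (hx : x ∈ s) (hy : y ∈ s) : f ((x + y) / 2) ≤ (f x + f y) / 2 := by
  have h := hf.2 hx hy (by norm_num : (0 : ℝ) ≤ 1 / 2) (by norm_num : (0 : ℝ) ≤ 1 / 2)
    (by norm_num)
  simp only [smul_eq_mul] at h
  rwa [← mul_add, ← mul_add, one_div_mul_eq_div, one_div_mul_eq_div] at h

theorem Monotone.mul_add_neg_mul_le_of_odd {g : ℝ → ℝ} (hmono : Monotone g) (hodd : g.Odd)
    {a b : ℝ} (ha : a ≤ 0) (hb : 0 ≤ b) :
    b * g b + (-a) * g (-a) ≤ (g b - g a) * (b - a) := by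
  have hgb : 0 ≤ g b := hodd.map_zero ▸ hmono hb
  have hga : g a ≤ 0 := hodd.map_zero ▸ hmono ha
  rw [hodd a]
  nlinarith [mul_nonneg (neg_nonneg.mpr ha) hgb, mul_nonneg hb (neg_nonneg.mpr hga)]

theorem stmt4_general (g G : ℝ → ℝ) (pm : ℝ)
    (hpm : 1 < pm)
    (hGconv : ConvexOn ℝ (Set.Ici 0) G)
    (hmono : Monotone g)
    (hodd : ∀ x, g (-x) = -g x)
    (hgrowth : ∀ b > 0, pm * G b ≤ b * g b) :
    ∀ a b : ℝ, a < 0 → 0 < b →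
      G (|b - a| / 2) ≤ (1 / (2 * pm)) * (g b - g a) * (b - a) := by
  intro a b ha hb
  have hpm0 : 0 < 2 * pm := by linarith
  have hGb := hgrowth b hb
  have hGa := hgrowth (-a) (neg_pos.mpr ha)
  calc G (|b - a| / 2) = G ((b + -a) / 2) := by rw [abs_of_pos (by linarith), sub_eq_add_neg]
    _ ≤ (G b + G (-a)) / 2 :=
        hGconv.map_add_div_two_le (Set.mem_Ici.mpr hb.le) (Set.mem_Ici.mpr (by linarith))
    _ ≤ (b * g b + (-a) * g (-a)) / (2 * pm) := by
        rw [le_div_iff₀ hpm0]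
        linarith
    _ ≤ (g b - g a) * (b - a) / (2 * pm) := by
        gcongr
        exact hmono.mul_add_neg_mul_le_of_odd hodd ha.le hb.le
    _ = (1 / (2 * pm)) * (g b - g a) * (b - a) := by ring

/-- Second case of the Lindqvist-type inequality:
for `a < 0 < b`, `G(|b−a|/2) ≤ (1/(2p⁻))(g(b)−g(a))(b−a)`. -/
theorem stmt4 (g G : ℝ → ℝ) (pm : ℝ)
    (hpm : 1 < pm)
    (hG0 : G 0 = 0)
    (hGconv : ConvexOn ℝ (Set.Ici 0) G)
    (hderiv : ∀ t > 0, HasDerivAt G (g t) t)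
    (hmono : Monotone g)
    (hodd : ∀ x, g (-x) = -g x)
    (hgrowth : ∀ b > 0, pm * G b ≤ b * g b) :
    ∀ a b : ℝ, a < 0 → 0 < b →
      G (|b - a| / 2) ≤ (1 / (2 * pm)) * (g b - g a) * (b - a) :=
  stmt4_general g G pm hpm hGconv hmono hodd hgrowth
end

section
/- Let g be an odd, nondecreasing function on ℝ with g' nondecreasing on (0,∞) and g(0)=0. Then for all a, b ∈ ℝ, |g(a) − g(b)| ≤ |a − b| · g'(|a| + |b|), provided g is differentiable at the relevant points. -/
/-! Oddness makes `g'` even, and monotonicity of `g'` extends from `(0, ∞)` to `[0, ∞)` because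
`g` is convex there. Since `g` is nondecreasing, `|g'| = g'` is then bounded by `g'(|a| + |b|)` on
the interval `[-(|a| + |b|), |a| + |b|]`, which contains `a` and `b`; the mean value inequality
finishes the proof. -/

open Set

theorem Function.Odd.deriv {𝕜 F : Type*} [NontriviallyNormedField 𝕜] [NormedAddCommGroup F]
    [NormedSpace 𝕜 F] {f : 𝕜 → F} (hf : Function.Odd f) : Function.Even (deriv f) := by
  intro x
  have hf' : f = fun y => -f (-y) := funext fun y => by rw [hf, neg_neg]
  conv_lhs => rw [hf']
  rw [deriv.fun_neg, deriv_comp_neg, neg_neg, neg_neg]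

theorem monotoneOn_deriv_Ici_of_Ioi {f : ℝ → ℝ} {a : ℝ}
    (hf : ∀ x ∈ Ici a, DifferentiableAt ℝ f x) (hmono : MonotoneOn (deriv f) (Ioi a)) :
    MonotoneOn (deriv f) (Ici a) := by
  rw [← interior_Ici] at hmono
  have hconvex : ConvexOn ℝ (Ici a) f :=
    hmono.convexOn_of_deriv (convex_Ici a) (fun x hx => (hf x hx).continuousAt.continuousWithinAt)
      (fun x hx => (hf x (interior_subset hx)).differentiableWithinAt)
  exact hconvex.monotoneOn_deriv hf

theorem Function.Even.le_of_abs_le {α : Type*} [Preorder α] {h : ℝ → α} (heven : Function.Even h)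
    (hmono : MonotoneOn h (Ici 0)) {x y : ℝ} (hxy : |x| ≤ y) : h x ≤ h y := by
  have habs : h x = h |x| := by
    rcases abs_choice x with hx | hx <;> rw [hx]
    exact (heven x).symm
  rw [habs]
  exact hmono (abs_nonneg x) ((abs_nonneg x).trans hxy) hxy

theorem stmt5_general (g : ℝ → ℝ)
    (hodd : ∀ x, g (-x) = -g x)
    (hmono : Monotone g)
    (hdiff : ∀ t, DifferentiableAt ℝ g t)
    (hderivmono : ∀ t1 t2 : ℝ, 0 < t1 → t1 ≤ t2 → deriv g t1 ≤ deriv g t2) :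
    ∀ a b : ℝ, |g a - g b| ≤ |a - b| * deriv g (|a| + |b|) := by
  intro a b
  set S := |a| + |b|
  have hderivmono' : MonotoneOn (deriv g) (Ici 0) :=
    monotoneOn_deriv_Ici_of_Ioi (fun x _ => hdiff x) fun x hx y _ hxy => hderivmono x y hx hxy
  have hbound : ∀ x ∈ Icc (-S) S, ‖deriv g x‖ ≤ deriv g S := fun x hx => by
    rw [Real.norm_eq_abs, abs_of_nonneg hmono.deriv_nonneg]
    exact (Function.Odd.deriv hodd).le_of_abs_le hderivmono' (abs_le.2 hx)
  have ha : a ∈ Icc (-S) S := abs_le.1 (le_add_of_nonneg_right (abs_nonneg b))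
  have hb : b ∈ Icc (-S) S := abs_le.1 (le_add_of_nonneg_left (abs_nonneg a))
  have := (convex_Icc (-S) S).norm_image_sub_le_of_norm_deriv_le (fun x _ => hdiff x) hbound hb ha
  simpa only [Real.norm_eq_abs, mul_comm] using this

/-- For odd nondecreasing `g` with `g'` nondecreasing on `(0,∞)`,
`|g(a) − g(b)| ≤ |a − b| · g'(|a| + |b|)`. -/
theorem stmt5 (g : ℝ → ℝ)
    (hodd : ∀ x, g (-x) = -g x)
    (hmono : Monotone g)
    (hg0 : g 0 = 0)
    (hdiff : ∀ t, DifferentiableAt ℝ g t)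
    (hderivmono : ∀ t1 t2 : ℝ, 0 < t1 → t1 ≤ t2 → deriv g t1 ≤ deriv g t2) :
    ∀ a b : ℝ, |g a - g b| ≤ |a - b| * deriv g (|a| + |b|) :=
  stmt5_general g hodd hmono hdiff hderivmono
end

section
/- Let G be an N-function with derivative g, where g is strictly increasing and continuous with g(0)=0, and let Ḡ be the Legendre-conjugate N-function, Ḡ(t) = ∫₀ᵗ g⁻¹(τ)dτ. Suppose p⁻ − 1 ≤ t·g'(t)/g(t) ≤ p⁺ − 1 for t > 0. Then for all t > 0: (p⁻ − 1)·G(t) ≤ Ḡ(g(t)) ≤ (p⁺ − 1)·G(t). -/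
open Set MeasureTheory intervalIntegral

/-- With `Ḡ(s) = ∫₀ˢ g⁻¹` the conjugate of `G`, and
`p⁻−1 ≤ tg'(t)/g(t) ≤ p⁺−1`, one has `(p⁻−1)G(t) ≤ Ḡ(g(t)) ≤ (p⁺−1)G(t)`. -/
theorem stmt9 (g ginv G Gbar : ℝ → ℝ) (pm pp : ℝ)
    (hpm : 1 < pm) (hpmpp : pm ≤ pp)
    (hg0 : g 0 = 0)
    (hgmono : StrictMonoOn g (Set.Ici 0))
    (hgcont : ContinuousOn g (Set.Ici 0))
    (hginv : ∀ t ≥ 0, ginv (g t) = t)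
    (hG : ∀ t, G t = ∫ τ in (0:ℝ)..t, g τ)
    (hGbar : ∀ s, Gbar s = ∫ τ in (0:ℝ)..s, ginv τ)
    (hdiff : ∀ t > 0, DifferentiableAt ℝ g t)
    (hbound : ∀ t > 0, pm - 1 ≤ t * deriv g t / g t ∧ t * deriv g t / g t ≤ pp - 1) :
    ∀ t > 0, (pm - 1) * G t ≤ Gbar (g t) ∧ Gbar (g t) ≤ (pp - 1) * G t := by
  intro t ht
  have ht0 : (0:ℝ) ≤ t := ht.le
  have hgpos : ∀ x : ℝ, 0 < x → 0 < g x := fun x hx => by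
    have := hgmono (le_refl (0:ℝ) : (0:ℝ) ∈ Ici 0) hx.le hx
    rwa [hg0] at this
  have hIcc : Icc (0:ℝ) t ⊆ Ici 0 := fun x hx => hx.1
  have huIcc : Set.uIcc (0:ℝ) t = Icc (0:ℝ) t := uIcc_of_le ht0
  have hgcIcc : ContinuousOn g (Icc (0:ℝ) t) := hgcont.mono hIcc
  -- image of [0,t] under g is [0, g t]
  have himg : g '' Icc (0:ℝ) t = Icc (0:ℝ) (g t) := by
    apply Subset.antisymm
    · rintro _ ⟨x, hx, rfl⟩
      have h0 : g 0 ≤ g x := hgmono.monotoneOn (Set.left_mem_Icc.mpr ht0 |> hIcc) (hIcc hx) hx.1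
      have h1 : g x ≤ g t := hgmono.monotoneOn (hIcc hx) (Set.mem_Ici.mpr ht0) hx.2
      exact ⟨by rwa [hg0] at h0, h1⟩
    · have := intermediate_value_Icc ht0 hgcIcc
      rwa [hg0] at this
  -- ginv is monotone on [0, g t]
  have hginvmono : MonotoneOn ginv (Icc (0:ℝ) (g t)) := by
    rw [← himg]
    rintro _ ⟨a, ha, rfl⟩ _ ⟨b, hb, rfl⟩ hab
    rw [hginv a ha.1, hginv b hb.1]
    by_contra h
    push_neg at h
    exact absurd (hgmono (hIcc hb) (hIcc ha) h) (not_lt.mpr hab)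
  -- pointwise bounds on (0, ∞): (pm-1) g x ≤ x * deriv g x ≤ (pp-1) g x
  have hlow : ∀ x : ℝ, 0 < x → (pm - 1) * g x ≤ x * deriv g x := fun x hx => by
    have := (hbound x hx).1
    rwa [le_div_iff₀ (hgpos x hx)] at this
  have hhigh : ∀ x : ℝ, 0 < x → x * deriv g x ≤ (pp - 1) * g x := fun x hx => by
    have := (hbound x hx).2
    rwa [div_le_iff₀ (hgpos x hx)] at this
  -- integrability of x ↦ deriv g x * x on [0,t]
  have hgt := hgpos t ht
  have hmeas : Measurable (fun x : ℝ => deriv g x * x) :=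
    (measurable_deriv g).mul measurable_id
  have hintxg : IntegrableOn (fun x : ℝ => deriv g x * x) (Icc (0:ℝ) t) := by
    apply Measure.integrableOn_of_bounded (M := (pp - 1) * g t)
      (measure_Icc_lt_top).ne hmeas.aestronglyMeasurable
    filter_upwards [ae_restrict_mem measurableSet_Icc] with x hx
    rcases eq_or_lt_of_le hx.1 with h0 | h0
    · simp [← h0]
      nlinarith [hgt, hpm, hpmpp]
    · have h1 : x * deriv g x ≤ (pp - 1) * g x := hhigh x h0
      have h2 : 0 ≤ x * deriv g x := le_trans (by nlinarith [hgpos x h0, hpm]) (hlow x h0)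
      have h3 : g x ≤ g t := hgmono.monotoneOn (hIcc hx) (Set.mem_Ici.mpr ht0) hx.2
      rw [Real.norm_eq_abs, abs_of_nonneg (by linarith [mul_comm (deriv g x) x])]
      calc deriv g x * x = x * deriv g x := mul_comm _ _
        _ ≤ (pp - 1) * g x := h1
        _ ≤ (pp - 1) * g t := by nlinarith [hpm.le.trans hpmpp]
  have hintInterval : IntervalIntegrable (fun x : ℝ => deriv g x * x) volume 0 t :=
    (intervalIntegrable_iff_integrableOn_Icc_of_le ht0).mpr hintxg
  -- key identity: Gbar (g t) = ∫₀ᵗ deriv g x * x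
  have hkey : Gbar (g t) = ∫ x in (0:ℝ)..t, deriv g x * x := by
    have hsub := integral_comp_smul_deriv''' (a := (0:ℝ)) (b := t)
      (f := g) (f' := deriv g) (g := ginv)
      (by rw [huIcc]; exact hgcIcc)
      (by
        intro x hx
        rw [min_eq_left ht0, max_eq_right ht0] at hx
        exact ((hdiff x hx.1).hasDerivAt).hasDerivWithinAt)
      (by
        -- continuity of ginv on g '' Ioo 0 t
        rw [min_eq_left ht0, max_eq_right ht0]
        rintro _ ⟨x, hx, rfl⟩
        have hgx : g x ∈ Ioo (0:ℝ) (g t) :=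
          ⟨hgpos x hx.1, hgmono (hIcc ⟨hx.1.le, hx.2.le⟩) (Set.mem_Ici.mpr ht0) hx.2⟩
        have hc : ContinuousAt ginv (g x) := by
          apply continuousAt_of_monotoneOn_of_image_mem_nhds hginvmono
            (Icc_mem_nhds hgx.1 hgx.2)
          have : ginv '' Icc (0:ℝ) (g t) = Icc 0 t := by
            rw [← himg, ← Set.image_comp]
            have : Set.EqOn (ginv ∘ g) id (Icc (0:ℝ) t) := fun y hy => hginv y hy.1
            rw [Set.image_congr this, Set.image_id]
          rw [hginv x hx.1.le, this]
          exact Icc_mem_nhds hx.1 hx.2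
        exact hc.continuousWithinAt)
      (by
        rw [huIcc, himg]
        exact hginvmono.integrableOn_isCompact isCompact_Icc)
      (by
        rw [huIcc]
        apply hintxg.congr_fun _ measurableSet_Icc
        intro x hx
        simp only [Function.comp]
        rw [hginv x hx.1, smul_eq_mul])
    rw [hg0] at hsub
    rw [hGbar, ← hsub]
    apply integral_congr
    intro x hx
    rw [huIcc] at hx
    simp only [Function.comp, smul_eq_mul]
    rw [hginv x hx.1]
  -- integrability of g
  have hgint : IntervalIntegrable g volume 0 t := hgcIcc.intervalIntegrable_of_Icc ht0
  -- bounds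
  have hGt : (pm - 1) * G t = ∫ x in (0:ℝ)..t, (pm - 1) * g x := by
    rw [hG, intervalIntegral.integral_const_mul]
  have hGt' : (pp - 1) * G t = ∫ x in (0:ℝ)..t, (pp - 1) * g x := by
    rw [hG, intervalIntegral.integral_const_mul]
  constructor
  · rw [hkey, hGt]
    apply integral_mono_on ht0 (hgint.const_mul _) hintInterval
    intro x hx
    rcases eq_or_lt_of_le hx.1 with h0 | h0
    · simp [← h0, hg0]
    · rw [mul_comm (deriv g x) x]; exact hlow x h0
  · rw [hkey, hGt']
    apply integral_mono_on ht0 hintInterval (hgint.const_mul _)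
    intro x hx
    rcases eq_or_lt_of_le hx.1 with h0 | h0
    · simp [← h0, hg0]
    · rw [mul_comm (deriv g x) x]; exact hhigh x h0
end

section
/- Let G be an N-function with derivative g satisfying p⁻ ≤ tg(t)/G(t) ≤ p⁺ on (0,∞), and let Φ(t) := ∫₀ᵗ G⁻¹(G(1)τ^{q*−1})dτ for some q* > 1. Then for all t > 0: g(Φ'(t))·Φ(t) ≤ p⁺·G(1)·t^{q*}. -/
/-!
Since `Φ' = G⁻¹(G(1)t^{q*−1})` is nondecreasing, `Φ(t) ≤ t·Φ'(t)`. With `M := Φ'(t)`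
the upper index bound gives `M·g(M) ≤ p⁺·G(M) = p⁺·G(1)·t^{q*−1}`; multiply by `t`.
All that is needed about `G` is that it is positive and strictly increasing on `(0, ∞)`,
which follows from `G(1) > 0` and the lower index bound `t·g(t)/G(t) ≥ p⁻ > 0`.
-/

open Set intervalIntegral

theorem MonotoneOn.intervalIntegral_le_sub_mul {f : ℝ → ℝ} {a b : ℝ} (hab : a ≤ b)
    (hf : MonotoneOn f (Icc a b)) : ∫ x in a..b, f x ≤ (b - a) * f b := by
  have hint : IntervalIntegrable f MeasureTheory.volume a b :=
    MonotoneOn.intervalIntegrable (by rwa [uIcc_of_le hab])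
  calc ∫ x in a..b, f x ≤ ∫ _ in a..b, f b :=
        integral_mono_on hab hint intervalIntegrable_const
          fun x hx => hf hx (right_mem_Icc.mpr hab) hx.2
    _ = (b - a) * f b := by simp

theorem StrictMonoOn.monotoneOn_of_rightInvOn {G Ginv : ℝ → ℝ} {s t : Set ℝ}
    (hG : StrictMonoOn G s) (hmaps : MapsTo Ginv t s) (hinv : RightInvOn Ginv G t) :
    MonotoneOn Ginv t := fun x hx y hy hxy =>
  (hG.le_iff_le (hmaps hx) (hmaps hy)).mp (by rwa [hinv hx, hinv hy])

section IndexBounds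

variable {G g : ℝ → ℝ} {p : ℝ}

theorem ne_zero_of_lower_index_bound (hp : 0 < p) {t : ℝ} (h : p ≤ t * g t / G t) :
    G t ≠ 0 := fun hG => by
  rw [hG, div_zero] at h
  linarith

variable (hp : 0 < p) (hderiv : ∀ t > 0, HasDerivAt G (g t) t)
  (hindex : ∀ t > 0, p ≤ t * g t / G t) (hG1 : 0 < G 1)
include hp hderiv hindex hG1

theorem pos_of_lower_index_bound {t : ℝ} (ht : 0 < t) : 0 < G t := by
  by_contra! hGt
  have hcont : ContinuousOn G (Ioi 0) := fun x hx =>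
    (hderiv x hx).continuousAt.continuousWithinAt
  -- `G` does not vanish on the connected set `(0, ∞)`, yet it would change sign there.
  obtain ⟨c, hc, hGc⟩ := isPreconnected_Ioi.intermediate_value (mem_Ioi.mpr ht)
    (mem_Ioi.mpr one_pos) hcont ⟨hGt, hG1.le⟩
  exact ne_zero_of_lower_index_bound hp (hindex c hc) hGc

theorem deriv_pos_of_lower_index_bound {t : ℝ} (ht : 0 < t) : 0 < g t := by
  have hGt := pos_of_lower_index_bound hp hderiv hindex hG1 ht
  have h := hp.trans_le (hindex t ht)
  rw [lt_div_iff₀ hGt, zero_mul] at h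
  exact pos_of_mul_pos_right h ht.le

theorem strictMonoOn_of_lower_index_bound : StrictMonoOn G (Ioi 0) := by
  refine strictMonoOn_of_deriv_pos (convex_Ioi 0)
    (fun x hx => (hderiv x hx).continuousAt.continuousWithinAt) fun x hx => ?_
  rw [interior_Ioi] at hx
  rw [(hderiv x hx).deriv]
  exact deriv_pos_of_lower_index_bound hp hderiv hindex hG1 hx

end IndexBounds

section RightInverse

variable {G g Ginv : ℝ → ℝ} {p : ℝ} (hp : 0 < p) (hindex : ∀ t > 0, p ≤ t * g t / G t)
  (hGinv : ∀ s ≥ 0, G (Ginv s) = s ∧ 0 ≤ Ginv s)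
include hp hindex hGinv

theorem rightInverse_zero : Ginv 0 = 0 := by
  obtain ⟨hG0, hnonneg⟩ := hGinv 0 le_rfl
  by_contra hne
  exact ne_zero_of_lower_index_bound hp (hindex _ (hnonneg.lt_of_ne' hne)) hG0

theorem apply_zero_of_rightInverse : G 0 = 0 := by
  simpa [rightInverse_zero hp hindex hGinv] using (hGinv 0 le_rfl).1

theorem rightInverse_pos {s : ℝ} (hs : 0 < s) : 0 < Ginv s := by
  obtain ⟨hGs, hnonneg⟩ := hGinv s hs.le
  refine hnonneg.lt_of_ne' fun h0 => hs.ne' ?_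
  rw [← hGs, h0, apply_zero_of_rightInverse hp hindex hGinv]

theorem monotoneOn_rightInverse (hderiv : ∀ t > 0, HasDerivAt G (g t) t) (hG1 : 0 < G 1) :
    MonotoneOn Ginv (Ici 0) := by
  -- `G 0 = 0 < G t` for `t > 0` extends strict monotonicity from `(0, ∞)` to `[0, ∞)`.
  have hmono : StrictMonoOn G (Ici 0) := by
    intro x hx y hy hxy
    obtain rfl | hx0 := (mem_Ici.mp hx).eq_or_lt
    · rw [apply_zero_of_rightInverse hp hindex hGinv]
      exact pos_of_lower_index_bound hp hderiv hindex hG1 hxy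
    · exact strictMonoOn_of_lower_index_bound hp hderiv hindex hG1 hx0 (hx0.trans hxy) hxy
  exact hmono.monotoneOn_of_rightInvOn (fun s hs => (hGinv s hs).2) fun s hs => (hGinv s hs).1

end RightInverse

theorem stmt11_general (G g Ginv Φ : ℝ → ℝ) (pm pp qs : ℝ)
    (hpm : 1 < pm) (hqs : 1 < qs)
    (hG1 : 0 < G 1)
    (hderiv : ∀ t > 0, HasDerivAt G (g t) t)
    (hbound : ∀ t > 0, pm ≤ t * g t / G t ∧ t * g t / G t ≤ pp)
    (hGinv' : ∀ s ≥ 0, G (Ginv s) = s ∧ 0 ≤ Ginv s)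
    (hΦ : ∀ t, Φ t = ∫ τ in (0:ℝ)..t, Ginv (G 1 * τ ^ (qs - 1))) :
    ∀ t > 0, g (Ginv (G 1 * t ^ (qs - 1))) * Φ t ≤ pp * G 1 * t ^ qs := by
  intro t ht
  have hpm₀ : 0 < pm := one_pos.trans hpm
  have hlower : ∀ t > 0, pm ≤ t * g t / G t := fun t ht => (hbound t ht).1
  set M := Ginv (G 1 * t ^ (qs - 1))
  have hGM : G M = G 1 * t ^ (qs - 1) := (hGinv' _ (by positivity)).1
  have hM : 0 < M := rightInverse_pos hpm₀ hlower hGinv' (by positivity)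
  have hΦM : Φ t ≤ t * M := by
    have hmono : MonotoneOn (fun τ => Ginv (G 1 * τ ^ (qs - 1))) (Icc 0 t) := fun a ha b hb hab =>
      monotoneOn_rightInverse hpm₀ hlower hGinv' hderiv hG1
        (mul_nonneg hG1.le (Real.rpow_nonneg ha.1 _)) (mul_nonneg hG1.le (Real.rpow_nonneg hb.1 _))
        (mul_le_mul_of_nonneg_left (Real.rpow_le_rpow ha.1 hab (by linarith)) hG1.le)
    have h := hmono.intervalIntegral_le_sub_mul ht.le
    rwa [sub_zero, ← hΦ t] at h
  have hMg : M * g M ≤ pp * G M := (div_le_iff₀ (hGM ▸ by positivity)).mp (hbound M hM).2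
  have hgM : 0 < g M := deriv_pos_of_lower_index_bound hpm₀ hderiv hlower hG1 hM
  calc g M * Φ t ≤ g M * (t * M) := by gcongr
    _ = t * (M * g M) := by ring
    _ ≤ t * (pp * G M) := by gcongr
    _ = pp * G 1 * t ^ qs := by
      rw [hGM, Real.rpow_sub_one ht.ne']
      field_simp

/-- With `Φ'(t) = G⁻¹(G(1)t^{q*−1})`, one has
`g(Φ'(t))·Φ(t) ≤ p⁺·G(1)·t^{q*}` for all `t > 0`. -/
theorem stmt11 (G g Ginv Φ : ℝ → ℝ) (pm pp qs : ℝ)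
    (hpm : 1 < pm) (hpmpp : pm ≤ pp) (hqs : 1 < qs)
    (hG1 : 0 < G 1)
    (hderiv : ∀ t > 0, HasDerivAt G (g t) t)
    (hbound : ∀ t > 0, pm ≤ t * g t / G t ∧ t * g t / G t ≤ pp)
    (hGinv : ∀ t ≥ 0, Ginv (G t) = t)
    (hGinv' : ∀ s ≥ 0, G (Ginv s) = s ∧ 0 ≤ Ginv s)
    (hΦ : ∀ t, Φ t = ∫ τ in (0:ℝ)..t, Ginv (G 1 * τ ^ (qs - 1))) :
    ∀ t > 0, g (Ginv (G 1 * t ^ (qs - 1))) * Φ t ≤ pp * G 1 * t ^ qs :=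
  stmt11_general G g Ginv Φ pm pp qs hpm hqs hG1 hderiv hbound hGinv' hΦ
end
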